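/- Suppose x, y in (0,1), and normalized confusion matrices for two groups with strictly positive entries satisfy false positive parity (TNa·y = TNb·x), predictive parity (TPa·FPb = TPb·FPa), and overall accuracy equality (TPa+TNa = TPb+TNb). Then FNa = 1-x, FPa = x, FNb = 1-y, FPb = y is forced when additionally x ≠ y; in particular no solution with all entries strictly positive and x ≠ y exists. -/
import Mathlib


theorem stmt
    (x y TPa FNa TNa FPa TPb FNb TNb FPb : ℝ)
    (hx0 : 0 < x) (hx1 : x < 1) (hy0 : 0 < y) (hy1 : y < 1)
    (hTPa : 0 ≤ TPa) (hFNa : 0 ≤ FNa) (hTNa : 0 ≤ TNa) (hFPa : 0 ≤ FPa)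
    (hTPb : 0 ≤ TPb) (hFNb : 0 ≤ FNb) (hTNb : 0 ≤ TNb) (hFPb : 0 ≤ FPb)
    (hra : TPa + FNa = 1 - x) (hra' : TNa + FPa = x)
    (hrb : TPb + FNb = 1 - y) (hrb' : TNb + FPb = y)
    (hfpp : TNa * y = TNb * x)
    (hpp : TPa * FPb = TPb * FPa)
    (hoae : TPa + TNa = TPb + TNb)
    (hxy : x ≠ y)
    (hTPa' : 0 < TPa)
    (hFNa' : 0 < FNa)
    (hTNa' : 0 < TNa)
    (hFPa' : 0 < FPa)
    (hTPb' : 0 < TPb)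
    (hFNb' : 0 < FNb)
    (hTNb' : 0 < TNb)
    (hFPb' : 0 < FPb)
    : False := by
  have hFPa2 : FPa = x - TNa := by linarith
  have hFPb2 : FPb = y - TNb := by linarith
  have h : y * TPa * FPa = x * TPb * FPa := by
    subst hFPa2 hFPb2
    nlinarith [hpp, hfpp]
  have h1 : y * TPa = x * TPb := mul_right_cancel₀ (ne_of_gt hFPa') h
  have h2 : (x - y) * (TPa + TNa) = 0 := by linear_combination x * hoae - h1 - hfpp
  have := mul_ne_zero (sub_ne_zero.mpr hxy) (ne_of_gt (by linarith : (0:ℝ) < TPa + TNa))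
  exact this h2
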